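/- arXiv:1410.7637 — 2 statements merged into one kernel-verified Lean document; each statement's English description precedes it below -/
import Mathlib

section
/- Let $m, n_1, n_2$ be positive integers with $n_1 \ge m-2 \ge n_2 \ge 2$, $mn_1$ even, and $n_1 > m-5+n_2 + \frac{(n_2-1)(n_2-2)}{m-1-n_2}$. Then $r(K_{1,m-1}, S(n_1,n_2)) = m+n_1$. -/
open SimpleGraph

/-- `Contains G H` : the graph `G` contains a copy of `H` as a subgraph. -/
def Contains {V W : Type*} (G : SimpleGraph V) (H : SimpleGraph W) : Prop :=
  ∃ f : W ↪ V, ∀ a b, H.Adj a b → G.Adj (f a) (f b)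

/-- The Ramsey number `r(G₁,G₂)`: the smallest positive `p` such that every graph on `p`
vertices contains a copy of `G₁` or its complement contains a copy of `G₂`. -/
noncomputable def ramseyNumber {α β : Type*} (G₁ : SimpleGraph α) (G₂ : SimpleGraph β) : ℕ :=
  sInf {p | 0 < p ∧ ∀ G : SimpleGraph (Fin p), Contains G G₁ ∨ Contains Gᶜ G₂}

/-- The Turán/extremal number `ex(p; L)`: maximal number of edges of a graph on `p`
vertices with no copy of `L`. -/
noncomputable def exNum {W : Type*} (p : ℕ) (L : SimpleGraph W) : ℕ :=
  sSup {m | ∃ G : SimpleGraph (Fin p), ¬ Contains G L ∧ G.edgeSet.ncard = m}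

/-- The maximum degree of a graph. -/
noncomputable def maxDeg {α : Type*} (G : SimpleGraph α) : ℕ :=
  sSup {d | ∃ v, d = (G.neighborSet v).ncard}

/-- The star `K_{1,m-1}` on `m` vertices, centered at `0`. -/
def starGraph (m : ℕ) : SimpleGraph (Fin m) :=
  SimpleGraph.fromRel (fun i _ => (i : ℕ) = 0)

/-- The double star `S(n₁,n₂)`: vertex `0` is adjacent to `1` and to the `n₁` vertices
`2,…,n₁+1`; vertex `1` is adjacent to the `n₂` vertices `n₁+2,…,n₁+n₂+1`. -/
def doubleStar (n₁ n₂ : ℕ) : SimpleGraph (Fin (n₁ + n₂ + 2)) :=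
  SimpleGraph.fromRel (fun i j =>
    ((i : ℕ) = 0 ∧ (j : ℕ) = 1) ∨
    ((i : ℕ) = 0 ∧ 2 ≤ (j : ℕ) ∧ (j : ℕ) ≤ n₁ + 1) ∨
    ((i : ℕ) = 1 ∧ n₁ + 2 ≤ (j : ℕ)))

/-- The tree `Tₙ''` with edges `v₀vᵢ (1 ≤ i ≤ n-4)`, `v₁v_{n-3}`, `v₁v_{n-2}`, `v₂v_{n-1}`. -/
def treeDD (n : ℕ) : SimpleGraph (Fin n) :=
  SimpleGraph.fromRel (fun i j =>
    ((i : ℕ) = 0 ∧ 1 ≤ (j : ℕ) ∧ (j : ℕ) ≤ n - 4) ∨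
    ((i : ℕ) = 1 ∧ ((j : ℕ) = n - 3 ∨ (j : ℕ) = n - 2)) ∨
    ((i : ℕ) = 2 ∧ (j : ℕ) = n - 1))

/-- The tree `Tₙ'''` with edges `v₀vᵢ (1 ≤ i ≤ n-4)`, `v₁v_{n-3}`, `v₂v_{n-2}`, `v₃v_{n-1}`. -/
def treeDDD (n : ℕ) : SimpleGraph (Fin n) :=
  SimpleGraph.fromRel (fun i j =>
    ((i : ℕ) = 0 ∧ 1 ≤ (j : ℕ) ∧ (j : ℕ) ≤ n - 4) ∨
    ((i : ℕ) = 1 ∧ (j : ℕ) = n - 3) ∨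
    ((i : ℕ) = 2 ∧ (j : ℕ) = n - 2) ∨
    ((i : ℕ) = 3 ∧ (j : ℕ) = n - 1))

/-- The tree `Tₙ¹` with edges `v₀vᵢ (1 ≤ i ≤ n-3)`, `v_{n-4}v_{n-2}`, `v_{n-3}v_{n-1}`. -/
def treeT1 (n : ℕ) : SimpleGraph (Fin n) :=
  SimpleGraph.fromRel (fun i j =>
    ((i : ℕ) = 0 ∧ 1 ≤ (j : ℕ) ∧ (j : ℕ) ≤ n - 3) ∨
    ((i : ℕ) = n - 4 ∧ (j : ℕ) = n - 2) ∨
    ((i : ℕ) = n - 3 ∧ (j : ℕ) = n - 1))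

/-- The tree `Tₙ²` with edges `v₀vᵢ (1 ≤ i ≤ n-3)`, `v_{n-3}v_{n-2}`, `v_{n-3}v_{n-1}`. -/
def treeT2 (n : ℕ) : SimpleGraph (Fin n) :=
  SimpleGraph.fromRel (fun i j =>
    ((i : ℕ) = 0 ∧ 1 ≤ (j : ℕ) ∧ (j : ℕ) ≤ n - 3) ∨
    ((i : ℕ) = n - 3 ∧ ((j : ℕ) = n - 2 ∨ (j : ℕ) = n - 1)))


open Finset

/-!
Upper bound: if a graph on `m + n₁` vertices has no `K_{1,m-1}`, its complement `H` has minimum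
degree at least `n₁ + 1`. An edge `uv` of `H` carries a copy of `S(n₁, n₂)` centred at `u` and `v`
as soon as `|(N(u) ∪ N(v)) \ {u, v}| ≥ n₁ + n₂`. If no edge does, fix a vertex `u` of degree `Δ`
and let `T` be the set of vertices outside `N[u]`. Counting the edges between `N(u)` and `T` from
both sides gives `|T| (n₁ + 2 - |T|) ≤ Δ (n₁ + n₂ - Δ)` with `|T| = m + n₁ - 1 - Δ`, which the
lower bound on `n₁` rules out.

Lower bound: since `(m - 2)(m + n₁ - 1)` is even there is an `(m - 2)`-regular circulant graph on
`m + n₁ - 1` vertices; it contains no `K_{1,m-1}`, and its complement is `n₁`-regular, so it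
contains no `S(n₁, n₂)`, whose centre has degree `n₁ + 1`.
-/

lemma contains_iff_isContained {V W : Type*} {G : SimpleGraph V} {H : SimpleGraph W} :
    Contains G H ↔ H ⊑ G :=
  ⟨fun ⟨f, hf⟩ => ⟨⟨⟨f, hf _ _⟩, f.injective⟩⟩,
    fun ⟨c⟩ => ⟨c.toEmbedding, fun _ _ h => c.toHom.map_adj h⟩⟩

lemma starGraph_eq_starGraph_zero {m : ℕ} (hm : 0 < m) :
    _root_.starGraph m = SimpleGraph.starGraph (⟨0, hm⟩ : Fin m) := by
  ext i j
  simp [_root_.starGraph, Fin.ext_iff]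

lemma ramseyNumber_eq {α β W : Type*} [Fintype W] {G₁ : SimpleGraph α} {G₂ : SimpleGraph β}
    {p : ℕ} (hp : 0 < p) (hup : ∀ G : SimpleGraph (Fin p), G₁ ⊑ G ∨ G₂ ⊑ Gᶜ)
    (G₀ : SimpleGraph W) (hW : Fintype.card W + 1 = p) (h₁ : ¬ G₁ ⊑ G₀) (h₂ : ¬ G₂ ⊑ G₀ᶜ) :
    ramseyNumber G₁ G₂ = p := by
  simp only [ramseyNumber, contains_iff_isContained]
  refine le_antisymm (Nat.sInf_le ⟨hp, hup⟩) (le_csInf ⟨p, hp, hup⟩ fun q ⟨_, hq⟩ => ?_)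
  by_contra! hqp
  obtain ⟨f⟩ : Nonempty (Fin q ↪ W) :=
    Function.Embedding.nonempty_of_card_le (by rw [Fintype.card_fin]; omega)
  rcases hq (G₀.comap f) with h | h
  · exact h₁ (h.trans (Embedding.comap f G₀).isContained)
  · exact h₂ (h.trans (Embedding.complEquiv (Embedding.comap f G₀)).isContained)

lemma Finset.exists_disjoint_subsets_card_eq {α : Type*} [DecidableEq α] {X Y : Finset α}
    {k l : ℕ} (hX : k ≤ #X) (hY : l ≤ #Y) (hXY : k + l ≤ #(X ∪ Y)) :
    ∃ A ⊆ X, ∃ B ⊆ Y, #A = k ∧ #B = l ∧ Disjoint A B := by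
  have hY_split := card_sdiff_add_card_inter Y X
  have hXY_split : #(X ∪ Y) = #X + #(Y \ X) := by
    rw [← card_union_of_disjoint disjoint_sdiff, union_sdiff_self_eq_union]
  -- `B` uses the elements of `Y \ X` first, and only then those of `X ∩ Y`
  obtain ⟨B₁, hB₁, hB₁_card⟩ := exists_subset_card_eq (min_le_right l #(Y \ X))
  obtain ⟨B₂, hB₂, hB₂_card⟩ :=
    exists_subset_card_eq (show l - min l #(Y \ X) ≤ #(Y ∩ X) by omega)
  have hB₁₂ : Disjoint B₁ B₂ :=
    disjoint_of_subset_left hB₁ (disjoint_of_subset_right hB₂ (disjoint_sdiff_inter Y X))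
  have hX_B₂ : #(X \ B₂) = #X - #B₂ :=
    card_sdiff_of_subset (hB₂.trans inter_subset_right)
  obtain ⟨A, hA, hA_card⟩ := exists_subset_card_eq (show k ≤ #(X \ B₂) by omega)
  refine ⟨A, hA.trans sdiff_subset, B₁ ∪ B₂,
    union_subset (hB₁.trans sdiff_subset) (hB₂.trans inter_subset_left), hA_card,
    by rw [card_union_of_disjoint hB₁₂]; omega, disjoint_union_right.2 ⟨?_, ?_⟩⟩
  · exact disjoint_of_subset_left (hA.trans sdiff_subset)
      (disjoint_of_subset_right hB₁ disjoint_sdiff)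
  · exact disjoint_of_subset_left hA sdiff_disjoint

namespace ZMod

lemma intCast_injOn_Ico (N : ℕ) (a : ℤ) :
    Set.InjOn (Int.cast : ℤ → ZMod N) (Set.Ico a (a + N)) := by
  intro x hx y hy hxy
  rw [← sub_eq_zero, ← Int.cast_sub, intCast_zmod_eq_zero_iff_dvd] at hxy
  have := Int.eq_zero_of_abs_lt_dvd hxy
    (by rw [abs_lt]; constructor <;> linarith [hx.1, hx.2, hy.1, hy.2])
  linarith

lemma exists_finset_card_eq_two_mul {N h : ℕ} (hh : 2 * h < N) :
    ∃ s : Finset (ZMod N), #s = 2 * h ∧ ∀ x ∈ s, -x ∈ s ∧ x + x ≠ 0 := by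
  set I : Finset ℤ := (Icc (-h : ℤ) h).erase 0
  have hI : ∀ i ∈ I, i ≠ 0 ∧ -h ≤ i ∧ i ≤ h := by simp [I]
  refine ⟨I.image Int.cast, ?_, ?_⟩
  · have hinj : Set.InjOn (Int.cast : ℤ → ZMod N) I := fun i hi j hj =>
      intCast_injOn_Ico N (-h) (by have := hI i hi; constructor <;> omega)
        (by have := hI j hj; constructor <;> omega)
    rw [card_image_of_injOn hinj, card_erase_of_mem (by simp), Int.card_Icc]
    omega
  · simp only [mem_image, forall_exists_index, and_imp]
    rintro _ i hi rfl
    obtain ⟨hi₀, hi₁, hi₂⟩ := hI i hi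
    refine ⟨⟨-i, by simp [I]; omega, by simp⟩, fun h2i => hi₀ ?_⟩
    rw [← Int.cast_add, intCast_zmod_eq_zero_iff_dvd] at h2i
    have := Int.eq_zero_of_abs_lt_dvd h2i (by rw [abs_lt]; constructor <;> omega)
    omega

lemma exists_finset_card_eq_neg_mem {N k : ℕ} (hk : k < N) (hkN : Even (k * N)) :
    ∃ s : Finset (ZMod N), #s = k ∧ (0 : ZMod N) ∉ s ∧ ∀ x ∈ s, -x ∈ s := by
  obtain ⟨s, hs_card, hs⟩ := exists_finset_card_eq_two_mul (N := N) (h := k / 2) (by omega)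
  have hs₀ : (0 : ZMod N) ∉ s := fun h₀ => (hs 0 h₀).2 (add_zero 0)
  rcases Nat.even_or_odd k with hk_even | hk_odd
  · exact ⟨s, by rw [hs_card, Nat.two_mul_div_two_of_even hk_even], hs₀, fun x hx => (hs x hx).1⟩
  -- for odd `k` the element of order two is added as well
  obtain ⟨n, rfl⟩ := (Nat.even_mul.1 hkN).resolve_left (Nat.not_even_iff_odd.2 hk_odd)
  have hcc : (n : ZMod (n + n)) + n = 0 := by rw [← Nat.cast_add, ZMod.natCast_self]
  have hc₀ : (n : ZMod (n + n)) ≠ 0 := by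
    rw [Ne, natCast_eq_zero_iff]
    exact fun hdvd => by have := Nat.le_of_dvd (by omega) hdvd; omega
  have hc : (n : ZMod (n + n)) ∉ s := fun hc => (hs _ hc).2 hcc
  refine ⟨insert (n : ZMod (n + n)) s, ?_, ?_, ?_⟩
  · rw [card_insert_of_notMem hc, hs_card]
    have := Nat.odd_iff.1 hk_odd
    omega
  · simpa [not_or] using ⟨hc₀.symm, hs₀⟩
  · intro x hx
    rcases mem_insert.1 hx with rfl | hx
    · rw [neg_eq_of_add_eq_zero_left hcc]
      exact mem_insert_self _ _
    · exact mem_insert_of_mem (hs x hx).1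

end ZMod

lemma mul_add_sq_lt_of_lt_div {m n₁ n₂ t Δ : ℕ} (hm : n₂ + 2 ≤ m) (hΔ : n₁ + 1 ≤ Δ)
    (ht : t + Δ + 1 = m + n₁)
    (hgt : (n₁ : ℝ) > m - 5 + n₂ + (n₂ - 1) * (n₂ - 2) / (m - 1 - n₂)) :
    Δ * (n₁ + n₂) + t ^ 2 < t * (n₁ + 1 + 1) + Δ ^ 2 := by
  have hm' : (n₂ : ℝ) + 2 ≤ m := by exact_mod_cast hm
  have hΔ' : (n₁ : ℝ) + 1 ≤ Δ := by exact_mod_cast hΔ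
  have ht' : (t : ℝ) = m + n₁ - 1 - Δ := by
    have : (t : ℝ) + Δ + 1 = m + n₁ := by exact_mod_cast ht
    linarith
  have key : ((n₂ : ℝ) - 1) * (n₂ - 2) < (n₁ - (m - 5 + n₂)) * (m - 1 - n₂) :=
    (div_lt_iff₀ (by linarith)).1 (by linarith)
  -- the deficit grows linearly in `Δ`, with slope `2m - 4 - n₂`, and is positive at `Δ = n₁ + 1`
  have hslope : 0 ≤ ((Δ : ℝ) - n₁ - 1) * (2 * m - 4 - n₂) :=
    mul_nonneg (by linarith) (by linarith)
  have : (Δ : ℝ) * (n₁ + n₂) + t ^ 2 < t * (n₁ + 1 + 1) + Δ ^ 2 := by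
    rw [ht']
    linarith
  exact_mod_cast this

lemma le_degree_doubleStar_zero (n₁ n₂ : ℕ) [DecidableRel (doubleStar n₁ n₂).Adj] :
    n₁ + 1 ≤ (doubleStar n₁ n₂).degree 0 := by
  have hsub : Icc (1 : Fin (n₁ + n₂ + 2)) ⟨n₁ + 1, by omega⟩ ⊆
      (doubleStar n₁ n₂).neighborFinset 0 := by
    intro x hx
    rw [mem_Icc, Fin.le_def, Fin.le_def] at hx
    rw [SimpleGraph.mem_neighborFinset, doubleStar, SimpleGraph.fromRel_adj]
    simp only [Fin.val_one, Fin.val_zero, true_and] at hx ⊢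
    refine ⟨fun h => ?_, Or.inl ?_⟩
    · subst h; simp at hx
    · omega
  simpa using card_le_card hsub

namespace SimpleGraph

variable {V W : Type*} {G : SimpleGraph V}

lemma starGraph_isContained_of_le_degree [Fintype W] [DecidableEq W] [Fintype V]
    [DecidableRel G.Adj] (r : W) {v : V} (hv : Fintype.card W - 1 ≤ G.degree v) :
    starGraph r ⊑ G := by
  obtain ⟨g⟩ : Nonempty ({w // w ≠ r} ↪ G.neighborSet v) := by
    apply Function.Embedding.nonempty_of_card_le
    rwa [Fintype.card_subtype_compl, Fintype.card_subtype_eq, card_neighborSet_eq_degree]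
  let f : W → V := fun w => if h : w = r then v else g ⟨w, h⟩
  have hf_ne : ∀ w (h : w ≠ r), f w = g ⟨w, h⟩ := fun w h => dif_neg h
  have hadj : ∀ w (h : w ≠ r), G.Adj v (f w) := fun w h => hf_ne w h ▸ (g ⟨w, h⟩).2
  have hinj : Function.Injective f := by
    intro x y hxy
    by_cases hx : x = r <;> by_cases hy : y = r
    · exact hx.trans hy.symm
    · exact absurd (hxy ▸ hadj y hy) (by simp [f, hx])
    · exact absurd (hxy ▸ hadj x hx) (by simp [f, hy])
    · rw [hf_ne x hx, hf_ne y hy] at hxy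
      simpa using g.injective (Subtype.ext hxy)
  refine ⟨Hom.toCopy ⟨f, ?_⟩ hinj⟩
  rintro x y ⟨hxy, rfl | rfl⟩
  · simpa [f] using hadj y (Ne.symm hxy)
  · simpa [f] using (hadj x hxy).symm

lemma starGraph_isContained_iff [Fintype W] [DecidableEq W] [Fintype V] [DecidableRel G.Adj]
    (r : W) : starGraph r ⊑ G ↔ ∃ v, Fintype.card W - 1 ≤ G.degree v :=
  ⟨fun ⟨c⟩ => ⟨c r, degree_starGraph_center.symm.trans_le (c.degree_le r)⟩,
    fun ⟨_, hv⟩ => starGraph_isContained_of_le_degree r hv⟩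

lemma doubleStar_isContained_of_injective {n₁ n₂ : ℕ} {u v : V} {a : Fin n₁ → V}
    {b : Fin n₂ → V}
    (hinj : Function.Injective (Fin.cons u (Fin.cons v (Fin.append a b)) : Fin (n₁ + n₂ + 2) → V))
    (huv : G.Adj u v) (hua : ∀ i, G.Adj u (a i)) (hvb : ∀ j, G.Adj v (b j)) :
    doubleStar n₁ n₂ ⊑ G := by
  set f : Fin (n₁ + n₂ + 2) → V := Fin.cons u (Fin.cons v (Fin.append a b))
  have hleft : ∀ i : Fin n₁, f (Fin.castAdd n₂ i).succ.succ = a i := by simp [f]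
  have hright : ∀ j : Fin n₂, f (Fin.natAdd n₁ j).succ.succ = b j := by simp [f]
  have hrel : ∀ x y : Fin (n₁ + n₂ + 2), ((x : ℕ) = 0 ∧ (y : ℕ) = 1) ∨
      ((x : ℕ) = 0 ∧ 2 ≤ (y : ℕ) ∧ (y : ℕ) ≤ n₁ + 1) ∨ ((x : ℕ) = 1 ∧ n₁ + 2 ≤ (y : ℕ)) →
      G.Adj (f x) (f y) := by
    rintro x y (⟨hx, hy⟩ | ⟨hx, hy₁, hy₂⟩ | ⟨hx, hy⟩)
    · obtain rfl : x = 0 := Fin.ext hx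
      obtain rfl : y = 1 := Fin.ext (by simp [hy])
      exact huv
    · obtain rfl : x = 0 := Fin.ext hx
      have hy : y = (Fin.castAdd n₂ (⟨y - 2, by omega⟩ : Fin n₁)).succ.succ :=
        Fin.ext (by simp; omega)
      rw [hy, hleft]
      exact hua _
    · obtain rfl : x = 1 := Fin.ext (by simp [hx])
      have hy : y = (Fin.natAdd n₁ (⟨y - (n₁ + 2), by omega⟩ : Fin n₂)).succ.succ :=
        Fin.ext (by simp; omega)
      rw [hy, hright]
      exact hvb _
  refine ⟨Hom.toCopy ⟨f, ?_⟩ hinj⟩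
  rintro x y ⟨-, h | h⟩
  · exact hrel x y h
  · exact (hrel y x h).symm

lemma doubleStar_isContained_of_disjoint {n₁ n₂ : ℕ} {u v : V} (huv : G.Adj u v)
    {A B : Finset V} (hA : #A = n₁) (hB : #B = n₂) (hAu : ∀ x ∈ A, G.Adj u x)
    (hBv : ∀ y ∈ B, G.Adj v y) (hvA : v ∉ A) (huB : u ∉ B) (hAB : Disjoint A B) :
    doubleStar n₁ n₂ ⊑ G := by
  let a : Fin n₁ → V := fun i => (A.equivFinOfCardEq hA).symm i
  let b : Fin n₂ → V := fun j => (B.equivFinOfCardEq hB).symm j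
  have ha : ∀ i, a i ∈ A := fun i => ((A.equivFinOfCardEq hA).symm i).2
  have hb : ∀ j, b j ∈ B := fun j => ((B.equivFinOfCardEq hB).symm j).2
  have hab : ∀ i, Fin.append a b i ∈ A ∨ Fin.append a b i ∈ B :=
    Fin.addCases (by simp [ha]) (by simp [hb])
  have huA : u ∉ A := fun h => G.irrefl (hAu u h)
  have hvB : v ∉ B := fun h => G.irrefl (hBv v h)
  refine doubleStar_isContained_of_injective
    (Fin.cons_injective_iff.2 ⟨?_, Fin.cons_injective_iff.2 ⟨?_, ?_⟩⟩) huv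
    (fun i => hAu _ (ha i)) (fun j => hBv _ (hb j))
  · rintro ⟨i, hi⟩
    cases i using Fin.cases with
    | zero => exact huv.ne hi.symm
    | succ i =>
      rw [Fin.cons_succ] at hi
      simpa [hi, huA, huB] using hab i
  · rintro ⟨i, hi⟩
    simpa [hi, hvA, hvB] using hab i
  · refine Fin.append_injective_iff.2 ⟨fun i j h => ?_, fun i j h => ?_, fun i j h => ?_⟩
    · simpa [a] using h
    · simpa [b] using h
    · exact Finset.disjoint_left.1 hAB (ha i) (h ▸ hb j)

lemma exists_le_degree_of_doubleStar_isContained [Fintype V] [DecidableRel G.Adj]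
    {n₁ n₂ : ℕ} (h : doubleStar n₁ n₂ ⊑ G) : ∃ v, n₁ + 1 ≤ G.degree v := by
  classical
  obtain ⟨c⟩ := h
  exact ⟨c 0, (le_degree_doubleStar_zero n₁ n₂).trans (c.degree_le 0)⟩

lemma circulantGraph_isRegularOfDegree {G : Type*} [AddGroup G] [Fintype G] [DecidableEq G]
    {s : Finset G} (hs₀ : 0 ∉ s) (hs_neg : ∀ x ∈ s, -x ∈ s) :
    (circulantGraph (s : Set G)).IsRegularOfDegree #s := by
  intro x
  have hnbhd : (circulantGraph (s : Set G)).neighborFinset x = s.image (· + x) := by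
    ext y
    simp only [mem_neighborFinset, circulantGraph_adj, mem_coe, mem_image]
    constructor
    · rintro ⟨-, h | h⟩
      · exact ⟨y - x, by simpa using hs_neg _ h, sub_add_cancel y x⟩
      · exact ⟨y - x, h, sub_add_cancel y x⟩
    · rintro ⟨d, hd, rfl⟩
      refine ⟨fun h => hs₀ ?_, Or.inr (by simpa using hd)⟩
      rwa [show d = 0 by simpa using h.symm] at hd
  rw [← card_neighborFinset_eq_degree, hnbhd, card_image_of_injective _ (add_left_injective x)]

section Finite

variable [Fintype V] [DecidableEq V] [DecidableRel G.Adj]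

lemma doubleStar_isContained_of_card_neighborFinset_union {n₁ n₂ : ℕ} {u v : V}
    (huv : G.Adj u v) (hu : n₁ + 1 ≤ G.degree u) (hv : n₂ + 1 ≤ G.degree v)
    (hcard : n₁ + n₂ ≤ #((G.neighborFinset u ∪ G.neighborFinset v) \ {u, v})) :
    doubleStar n₁ n₂ ⊑ G := by
  have hunion : (G.neighborFinset u).erase v ∪ (G.neighborFinset v).erase u =
      (G.neighborFinset u ∪ G.neighborFinset v) \ {u, v} := by
    ext x
    simp only [mem_union, mem_erase, mem_sdiff, mem_insert, mem_singleton, mem_neighborFinset]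
    constructor
    · rintro (⟨hxv, hux⟩ | ⟨hxu, hvx⟩)
      · exact ⟨Or.inl hux, by rintro (rfl | rfl) <;> simp_all⟩
      · exact ⟨Or.inr hvx, by rintro (rfl | rfl) <;> simp_all⟩
    · rintro ⟨hux | hvx, hx⟩
      · exact Or.inl ⟨fun h => hx (Or.inr h), hux⟩
      · exact Or.inr ⟨fun h => hx (Or.inl h), hvx⟩
  obtain ⟨A, hA, B, hB, hA_card, hB_card, hAB⟩ :=
    exists_disjoint_subsets_card_eq (k := n₁) (l := n₂)
      (X := (G.neighborFinset u).erase v) (Y := (G.neighborFinset v).erase u)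
      (by rw [card_erase_of_mem (by simpa using huv), card_neighborFinset_eq_degree]; omega)
      (by rw [card_erase_of_mem (by simpa using huv.symm), card_neighborFinset_eq_degree]; omega)
      (hunion ▸ hcard)
  refine doubleStar_isContained_of_disjoint huv hA_card hB_card
    (fun x hx => by simpa using (mem_erase.1 (hA hx)).2)
    (fun y hy => by simpa using (mem_erase.1 (hB hy)).2)
    (fun h => (mem_erase.1 (hA h)).1 rfl) (fun h => (mem_erase.1 (hB h)).1 rfl) hAB

lemma degree_add_one_le_card_bipartiteAbove_add {u w : V}
    (hw : w ∈ (insert u (G.neighborFinset u))ᶜ) :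
    G.degree w + 1 ≤
      #((G.neighborFinset u).bipartiteAbove G.Adj w) + #(insert u (G.neighborFinset u))ᶜ := by
  have hwu : w ∉ insert u (G.neighborFinset u) := mem_compl.1 hw
  have hsub : insert w (G.neighborFinset w) ⊆
      (G.neighborFinset u).bipartiteAbove G.Adj w ∪ (insert u (G.neighborFinset u))ᶜ := by
    intro x hx
    rw [mem_insert, mem_neighborFinset] at hx
    rw [mem_union, mem_bipartiteAbove G.Adj, mem_compl]
    rcases hx with rfl | hwx
    · exact Or.inr hwu
    · by_cases hux : x ∈ G.neighborFinset u
      · exact Or.inl ⟨hux, hwx⟩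
      · refine Or.inr fun hx => ?_
        rcases mem_insert.1 hx with rfl | hx
        · exact hwu (mem_insert_of_mem (by simpa using hwx.symm))
        · exact hux hx
  calc G.degree w + 1 = #(insert w (G.neighborFinset w)) := by
        rw [card_insert_of_notMem (by simp), card_neighborFinset_eq_degree]
    _ ≤ _ := (card_le_card hsub).trans (card_union_le _ _)

lemma degree_add_card_bipartiteBelow_le {u v : V} (hv : v ∈ G.neighborFinset u) :
    G.degree u + #((insert u (G.neighborFinset u))ᶜ.bipartiteBelow G.Adj v) ≤
      #((G.neighborFinset u ∪ G.neighborFinset v) \ {u, v}) + 1 := by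
  have hdisj : Disjoint ((G.neighborFinset u).erase v)
      ((insert u (G.neighborFinset u))ᶜ.bipartiteBelow G.Adj v) := by
    refine Finset.disjoint_left.2 fun x hx hx' => ?_
    exact mem_compl.1 ((mem_bipartiteBelow G.Adj).1 hx').1 (mem_insert_of_mem (mem_erase.1 hx).2)
  have hsub : (G.neighborFinset u).erase v ∪
      (insert u (G.neighborFinset u))ᶜ.bipartiteBelow G.Adj v ⊆
      (G.neighborFinset u ∪ G.neighborFinset v) \ {u, v} := by
    intro x hx
    simp only [mem_union, mem_erase, mem_bipartiteBelow G.Adj, mem_compl, mem_insert,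
      mem_sdiff, mem_singleton, not_or, mem_neighborFinset] at hx ⊢
    rcases hx with ⟨hxv, hux⟩ | ⟨⟨hxu, -⟩, hxv⟩
    · exact ⟨Or.inl hux, hux.ne', hxv⟩
    · exact ⟨Or.inr hxv.symm, hxu, hxv.ne⟩
  have hcard := card_le_card hsub
  rw [card_union_of_disjoint hdisj, card_erase_of_mem hv, card_neighborFinset_eq_degree] at hcard
  have hu : 0 < G.degree u := (card_pos.2 ⟨v, hv⟩).trans_eq (G.card_neighborFinset_eq_degree u)
  omega

lemma card_compl_mul_add_degree_sq_le (u : V) {δ s : ℕ} (hδ : ∀ w, δ ≤ G.degree w)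
    (hs : ∀ v ∈ G.neighborFinset u,
      #((G.neighborFinset u ∪ G.neighborFinset v) \ {u, v}) < s) :
    #(insert u (G.neighborFinset u))ᶜ * (δ + 1) + G.degree u ^ 2 ≤
      G.degree u * s + #(insert u (G.neighborFinset u))ᶜ ^ 2 := by
  set A := G.neighborFinset u
  set T := (insert u A)ᶜ
  have hfar : ∀ w ∈ T, δ + 1 ≤ #(A.bipartiteAbove G.Adj w) + #T := fun w hw =>
    (Nat.succ_le_succ (hδ w)).trans (degree_add_one_le_card_bipartiteAbove_add hw)
  have hnear : ∀ v ∈ A, G.degree u + #(T.bipartiteBelow G.Adj v) ≤ s := fun v hv =>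
    (degree_add_card_bipartiteBelow_le hv).trans (hs v hv)
  have hcount := sum_card_bipartiteAbove_eq_sum_card_bipartiteBelow (s := T) (t := A) G.Adj
  have hT := sum_le_sum hfar
  have hA := sum_le_sum hnear
  simp only [sum_const, smul_eq_mul, sum_add_distrib, card_neighborFinset_eq_degree, A] at hT hA
  linarith

theorem doubleStar_isContained_of_forall_degree {m n₁ n₂ : ℕ} (hV : Fintype.card V = m + n₁)
    (hdeg : ∀ v, n₁ + 1 ≤ G.degree v) (hn : n₂ ≤ n₁) (hm : n₂ + 2 ≤ m)
    (hgt : (n₁ : ℝ) > m - 5 + n₂ + (n₂ - 1) * (n₂ - 2) / (m - 1 - n₂)) :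
    doubleStar n₁ n₂ ⊑ G := by
  by_contra hfree
  have hs : ∀ u, ∀ v ∈ G.neighborFinset u,
      #((G.neighborFinset u ∪ G.neighborFinset v) \ {u, v}) < n₁ + n₂ := by
    intro u v hv
    by_contra! hcard
    exact hfree (doubleStar_isContained_of_card_neighborFinset_union
      ((mem_neighborFinset G u v).1 hv) (hdeg u) (by linarith [hdeg v]) hcard)
  obtain ⟨u⟩ : Nonempty V := Fintype.card_pos_iff.1 (by omega)
  have hT : #(insert u (G.neighborFinset u))ᶜ + G.degree u + 1 = m + n₁ := by
    rw [card_compl, card_insert_of_notMem (by simp), card_neighborFinset_eq_degree, ← hV]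
    have := G.degree_lt_card_verts u
    omega
  exact (mul_add_sq_lt_of_lt_div hm (hdeg u) hT hgt).not_ge
    (by linarith [card_compl_mul_add_degree_sq_le u hdeg (hs u)])

end Finite

end SimpleGraph

theorem stmt10 (m n₁ n₂ : ℕ) (h3 : 2 ≤ n₂) (h2 : n₂ ≤ m - 2) (h1 : m - 2 ≤ n₁)
    (he : 2 ∣ m * n₁)
    (hgt : (n₁ : ℝ) > (m : ℝ) - 5 + n₂ + ((n₂ : ℝ) - 1) * ((n₂ : ℝ) - 2) / ((m : ℝ) - 1 - n₂)) :
    ramseyNumber (_root_.starGraph m) (doubleStar n₁ n₂) = m + n₁ := by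
  have hm : n₂ + 2 ≤ m := by omega
  rw [starGraph_eq_starGraph_zero (by omega)]
  have : NeZero (m + n₁ - 1) := ⟨by omega⟩
  have hpar : Even ((m - 2) * (m + n₁ - 1)) := by
    have := Nat.even_mul.1 (even_iff_two_dvd.2 he)
    rw [Nat.even_mul]
    simp only [Nat.even_iff] at *
    omega
  obtain ⟨s, hs_card, hs₀, hs_neg⟩ := ZMod.exists_finset_card_eq_neg_mem (by omega) hpar
  have hreg := hs_card ▸ circulantGraph_isRegularOfDegree hs₀ hs_neg
  refine ramseyNumber_eq (by omega) (fun G => ?_) (circulantGraph (s : Set (ZMod (m + n₁ - 1))))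
    (by rw [ZMod.card]; omega) ?_ ?_
  · classical
    rw [or_iff_not_imp_left, starGraph_isContained_iff, not_exists]
    refine fun hG =>
      doubleStar_isContained_of_forall_degree (by simp) (fun v => ?_) (by omega) hm hgt
    rw [degree_compl, Fintype.card_fin]
    have := hG v
    simp only [Fintype.card_fin] at this
    omega
  · rw [starGraph_isContained_iff]
    rintro ⟨v, hv⟩
    rw [hreg.degree_eq, Fintype.card_fin] at hv
    omega
  · intro h
    obtain ⟨v, hv⟩ := exists_le_degree_of_doubleStar_isContained h
    rw [hreg.compl.degree_eq, ZMod.card] at hv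
    omega
end

section
/- Let $m,n$ be positive integers with $m \ge 6$, $n \ge m+3$, and $m(n-1)$ odd. Then $r(K_{1,m-1}, T_n'') = m+n-6$, where $T_n''$ is the tree defined below. -/
/-
Upper bound: if a graph `G` on `m + n - 6` vertices contains no `K_{1,m-1}`, every vertex of
`H = Gᶜ` has degree at least `n - 5`. Both `m + n - 6` and `n - 5` are odd, so by the handshake
lemma `H` is not `(n - 5)`-regular and some vertex `u` has degree at least `n - 4`. Map `v₀` to
`u`, `v₁, v₂` and the other `n - 6` leaves of `v₀` into `N(u)`. The smaller `N(u)` is, the more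
of the three remaining vertices must lie outside the closed neighbourhood `N[u]`: none if
`|N(u)| ≥ n - 1`, one if `|N(u)| = n - 2` (every vertex outside `N[u]` has a neighbour in `N(u)`),
and all three if `|N(u)| ≤ n - 3`; then double counting the edges between `N(u)` and the rest
yields a vertex of `N(u)` with two neighbours outside `N[u]`.

Lower bound: an `(m - 2)`-regular graph on the even number `m + n - 7` of vertices (a bipartite
Cayley sum graph over `ZMod ((m + n - 7) / 2)`) contains no `K_{1,m-1}`, and its complement is
`(n - 6)`-regular, whereas `v₀` has degree `n - 4` in `Tₙ''`.
-/

open SimpleGraph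

open Finset

section Containment

variable {V W : Type*}

lemma Contains.of_comap {V' : Type*} {G : SimpleGraph V'} {K : SimpleGraph W} (f : V ↪ V')
    (h : Contains (G.comap f) K) : Contains G K :=
  let ⟨g, hg⟩ := h
  ⟨g.trans f, hg⟩

lemma Contains.exists_card_le_degree [Fintype V] {G : SimpleGraph V} [DecidableRel G.Adj]
    {K : SimpleGraph W} (h : Contains G K) {w : W} {s : Finset W} (hs : ∀ x ∈ s, K.Adj w x) :
    ∃ v, #s ≤ G.degree v := by
  obtain ⟨f, hf⟩ := h
  refine ⟨f w, ?_⟩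
  rw [← card_neighborFinset_eq_degree]
  exact card_le_card_of_injOn f (fun x hx => by simpa using hf _ _ (hs x hx)) f.injective.injOn

end Containment

lemma ramseyNumber_eq_succ {α β V : Type*} [Fintype V] {G₁ : SimpleGraph α} {G₂ : SimpleGraph β}
    {p : ℕ} (hp : ∀ G : SimpleGraph (Fin (p + 1)), Contains G G₁ ∨ Contains Gᶜ G₂)
    (hV : Fintype.card V = p) (G : SimpleGraph V) (h₁ : ¬Contains G G₁) (h₂ : ¬Contains Gᶜ G₂) :
    ramseyNumber G₁ G₂ = p + 1 := by
  refine le_antisymm (Nat.sInf_le ⟨p.succ_pos, hp⟩) (le_csInf ⟨_, p.succ_pos, hp⟩ ?_)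
  rintro q ⟨-, hq⟩
  by_contra! hqp
  let f : Fin q ↪ V :=
    (Fin.castLEEmb (by omega)).trans (Fintype.equivFinOfCardEq hV).symm.toEmbedding
  have hcompl : (G.comap f)ᶜ = Gᶜ.comap f := by
    ext
    simp [f.injective.ne_iff]
  rcases hq (G.comap f) with h | h
  · exact h₁ (h.of_comap f)
  · exact h₂ ((hcompl ▸ h).of_comap f)

lemma SimpleGraph.Adj.ne_of_not_adj {V : Type*} {G : SimpleGraph V} {u v w : V} (hv : G.Adj u v)
    (hw : ¬G.Adj u w) : v ≠ w := by
  rintro rfl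
  exact hw hv

section Degrees

variable {V : Type*} [Fintype V] {G : SimpleGraph V} [DecidableRel G.Adj]

lemma SimpleGraph.exists_adj_notMem (v : V) (E : Finset V) (h : #E < G.degree v) :
    ∃ w, G.Adj v w ∧ w ∉ E := by
  rw [← card_neighborFinset_eq_degree] at h
  obtain ⟨w, hw, hwE⟩ := exists_mem_notMem_of_card_lt_card h
  exact ⟨w, (G.mem_neighborFinset v w).1 hw, hwE⟩

lemma le_card_neighborFinset_sdiff [DecidableEq V] {v : V} {S : Finset V} {k : ℕ}
    (h : k + #S ≤ G.degree v) : k ≤ #(G.neighborFinset v \ S) := by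
  have := le_card_sdiff S (G.neighborFinset v)
  rw [card_neighborFinset_eq_degree] at this
  omega

lemma contains_starGraph_iff {m : ℕ} (hm : 0 < m) :
    Contains G (_root_.starGraph m) ↔ ∃ v, m - 1 ≤ G.degree v := by
  constructor
  · intro h
    have := h.exists_card_le_degree (w := ⟨0, hm⟩) (s := univ.erase ⟨0, hm⟩) fun x hx => by
      simpa [_root_.starGraph, eq_comm] using ne_of_mem_erase hx
    simpa using this
  · rintro ⟨v, hv⟩
    obtain ⟨k, rfl⟩ : ∃ k, m = k + 1 := ⟨m - 1, by omega⟩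
    obtain ⟨e⟩ : Nonempty (Fin k ↪ G.neighborSet v) :=
      Function.Embedding.nonempty_of_card_le (by rwa [Fintype.card_fin, card_neighborSet_eq_degree])
    have hv : v ∉ Set.range (e.trans (Function.Embedding.subtype _)) := by
      rintro ⟨i, hi⟩
      have hi' := (e i).2
      rw [SimpleGraph.mem_neighborSet, show (e i : V) = v from hi] at hi'
      exact G.irrefl hi'
    have hadj : ∀ i : Fin (k + 1), i ≠ 0 →
        G.Adj (Fin.Embedding.cons _ hv 0) (Fin.Embedding.cons _ hv i) := by
      intro i hi
      obtain ⟨j, rfl⟩ := Fin.exists_succ_eq.2 hi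
      have hj := (e j).2
      rw [SimpleGraph.mem_neighborSet] at hj
      simpa [Fin.Embedding.coe_cons] using hj
    refine ⟨Fin.Embedding.cons _ hv, fun a b hab => ?_⟩
    simp only [_root_.starGraph, SimpleGraph.fromRel_adj, Fin.val_eq_zero_iff] at hab
    rcases hab with ⟨hab, rfl | rfl⟩
    exacts [hadj b hab.symm, (hadj a hab).symm]

lemma Contains.exists_le_degree_of_treeDD {n : ℕ} (hn : 0 < n) (h : Contains G (treeDD n)) :
    ∃ v, n - 4 ≤ G.degree v := by
  have := h.exists_card_le_degree (w := ⟨0, hn⟩) (s := Ioc ⟨0, hn⟩ ⟨n - 4, by omega⟩) fun x hx => by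
    simp only [mem_Ioc, Fin.lt_def, Fin.le_def] at hx
    rw [treeDD, SimpleGraph.fromRel_adj]
    exact ⟨Fin.ne_of_val_ne hx.1.ne, .inl (.inl ⟨rfl, by omega⟩)⟩
  simpa using this

lemma exists_lt_degree_of_odd {d : ℕ} (hV : Odd (Fintype.card V)) (hd : Odd d)
    (h : ∀ v, d ≤ G.degree v) : ∃ v, d < G.degree v := by
  by_contra! hG
  have hodd : ({v | Odd (G.degree v)} : Finset V) = univ := by
    ext v
    simp [le_antisymm (hG v) (h v), hd]
  have := G.even_card_odd_degree_vertices
  rw [hodd, card_univ] at this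
  exact Nat.not_even_iff_odd.2 hV this

end Degrees

section TreeEmbedding

variable {V : Type*} {H : SimpleGraph V} {n : ℕ}

-- The `i`-th entry of the list is the image of `vᵢ`.
lemma contains_treeDD_of_nodup {u v₁ v₂ w₁ w₂ w₃ : V} {L : List V}
    (hL : (u :: v₁ :: v₂ :: L ++ [w₁, w₂, w₃]).Nodup) (hn : L.length + 6 = n)
    (hu : ∀ x ∈ v₁ :: v₂ :: L, H.Adj u x) (h₁ : H.Adj v₁ w₁) (h₂ : H.Adj v₁ w₂)
    (h₃ : H.Adj v₂ w₃) : Contains H (treeDD n) := by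
  subst hn
  set l := u :: v₁ :: v₂ :: L ++ [w₁, w₂, w₃]
  have hlen : l.length = L.length + 6 := by simp [l]
  have key : ∀ i j : Fin (L.length + 6),
      ((i : ℕ) = 0 ∧ 1 ≤ (j : ℕ) ∧ (j : ℕ) ≤ L.length + 6 - 4) ∨
      ((i : ℕ) = 1 ∧ ((j : ℕ) = L.length + 6 - 3 ∨ (j : ℕ) = L.length + 6 - 2)) ∨
      ((i : ℕ) = 2 ∧ (j : ℕ) = L.length + 6 - 1) → H.Adj l[(i : ℕ)] l[(j : ℕ)] := by
    rintro ⟨i, hi⟩ ⟨j, hj⟩ (⟨rfl, hj₁, hj₂⟩ | ⟨rfl, rfl | rfl⟩ | ⟨rfl, rfl⟩)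
    · simp only at hj₁ hj₂
      obtain ⟨k, rfl⟩ : ∃ k, j = k + 1 := ⟨j - 1, by omega⟩
      apply hu
      rw [List.getElem_append_left (by simp only [List.length_cons]; omega), List.getElem_cons_succ]
      exact List.getElem_mem _
    all_goals simpa [l, List.getElem_append_right] using ‹_›
  refine ⟨⟨fun i => l[(i : ℕ)], fun i j hij => Fin.ext (hL.getElem_inj_iff.1 hij)⟩, ?_⟩
  intro a b hab
  rw [treeDD, SimpleGraph.fromRel_adj] at hab
  rcases hab.2 with h | h
  exacts [key a b h, (key b a h).symm]

variable [Fintype V] [DecidableEq V] [DecidableRel H.Adj]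

lemma contains_treeDD_of_adj (hn : 6 ≤ n) {u v₁ v₂ w₁ w₂ w₃ : V} (huv₁ : H.Adj u v₁)
    (huv₂ : H.Adj u v₂) (hv : v₁ ≠ v₂) (h₁ : H.Adj v₁ w₁) (h₂ : H.Adj v₁ w₂) (h₃ : H.Adj v₂ w₃)
    (hw₁ : w₁ ∉ ({u, v₂} : Finset V)) (hw₂ : w₂ ∉ ({u, v₂, w₁} : Finset V))
    (hw₃ : w₃ ∉ ({u, v₁, w₁, w₂} : Finset V))
    (hT : n - 6 ≤ #(H.neighborFinset u \ {w₁, w₂, w₃, v₁, v₂})) : Contains H (treeDD n) := by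
  obtain ⟨T, hTsub, hTcard⟩ := exists_subset_card_eq hT
  have hTmem : ∀ x ∈ T, H.Adj u x ∧ x ∉ ({w₁, w₂, w₃, v₁, v₂} : Finset V) := fun x hx => by
    simpa using hTsub hx
  refine contains_treeDD_of_nodup (u := u) (L := T.toList) ?_ (by rw [length_toList]; omega) ?_
    h₁ h₂ h₃
  · simp only [mem_insert, mem_singleton, not_or] at hw₁ hw₂ hw₃ hTmem
    have hTu : u ∉ T := fun h => (hTmem u h).1.ne rfl
    simp only [List.cons_append, List.nodup_cons, List.mem_cons, List.mem_append, mem_toList,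
      List.nodup_append, T.nodup_toList, List.not_mem_nil]
    grind [huv₁.ne, huv₂.ne, h₁.ne, h₂.ne, h₃.ne]
  · simp only [List.mem_cons, mem_toList]
    rintro x (rfl | rfl | hx)
    exacts [huv₁, huv₂, (hTmem x hx).1]

lemma contains_treeDD_of_le_degree (hn : 10 ≤ n) (hδ : ∀ v, n - 5 ≤ H.degree v) {u : V}
    (hu : n - 1 ≤ H.degree u) : Contains H (treeDD n) := by
  obtain ⟨v₁, huv₁, -⟩ := H.exists_adj_notMem u ∅ (by rw [card_empty]; omega)
  obtain ⟨v₂, huv₂, hv₂⟩ := H.exists_adj_notMem u {v₁} (by rw [card_singleton]; omega)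
  have := hδ v₁
  obtain ⟨w₁, h₁, hw₁⟩ := H.exists_adj_notMem v₁ {u, v₂} (card_le_two.trans_lt (by omega))
  obtain ⟨w₂, h₂, hw₂⟩ := H.exists_adj_notMem v₁ {u, v₂, w₁} (card_le_three.trans_lt (by omega))
  have := hδ v₂
  obtain ⟨w₃, h₃, hw₃⟩ :=
    H.exists_adj_notMem v₂ {u, v₁, w₁, w₂} (card_le_four.trans_lt (by omega))
  refine contains_treeDD_of_adj (by omega) huv₁ huv₂ (by simpa [eq_comm] using hv₂) h₁ h₂ h₃
    hw₁ hw₂ hw₃ (le_card_neighborFinset_sdiff ?_)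
  have : #({w₁, w₂, w₃, v₁, v₂} : Finset V) ≤ 5 := card_le_five
  omega

lemma contains_treeDD_of_adj_compl (hn : 10 ≤ n) (hδ : ∀ v, n - 5 ≤ H.degree v) {u v₁ b : V}
    (hu : n - 2 ≤ H.degree u) (huv₁ : H.Adj u v₁) (hb : H.Adj v₁ b)
    (hbu : b ∉ insert u (H.neighborFinset u)) : Contains H (treeDD n) := by
  rw [mem_insert, not_or, mem_neighborFinset] at hbu
  have := hδ v₁
  obtain ⟨w₂, h₂, hw₂⟩ := H.exists_adj_notMem v₁ {u, b} (card_le_two.trans_lt (by omega))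
  obtain ⟨v₂, huv₂, hv₂⟩ := H.exists_adj_notMem u {v₁, w₂} (card_le_two.trans_lt (by omega))
  have := hδ v₂
  obtain ⟨w₃, h₃, hw₃⟩ :=
    H.exists_adj_notMem v₂ {u, v₁, b, w₂} (card_le_four.trans_lt (by omega))
  simp only [mem_insert, mem_singleton, not_or] at hw₂ hv₂
  refine contains_treeDD_of_adj (by omega) huv₁ huv₂ (Ne.symm hv₂.1) hb h₂ h₃
    (by simp [hbu.1, (huv₂.ne_of_not_adj hbu.2).symm]) (by simp [hw₂, Ne.symm hv₂.2]) hw₃ ?_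
  rw [sdiff_insert_of_notMem (by simpa using hbu.2)]
  refine le_card_neighborFinset_sdiff ?_
  have : #({w₂, w₃, v₁, v₂} : Finset V) ≤ 4 := card_le_four
  omega

lemma contains_treeDD_of_three_adj_compl (hn : 6 ≤ n) {u v₁ v₂ w₁ w₂ w₃ : V}
    (hu : n - 4 ≤ H.degree u) (huv₁ : H.Adj u v₁) (huv₂ : H.Adj u v₂) (hv : v₁ ≠ v₂)
    (h₁ : H.Adj v₁ w₁) (h₂ : H.Adj v₁ w₂) (h₃ : H.Adj v₂ w₃) (hw₁₂ : w₁ ≠ w₂)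
    (hw₃ : w₃ ∉ ({w₁, w₂} : Finset V))
    (hw : ∀ w ∈ ({w₁, w₂, w₃} : Finset V), w ∉ insert u (H.neighborFinset u)) :
    Contains H (treeDD n) := by
  simp only [mem_insert, mem_singleton, forall_eq_or_imp, forall_eq, not_or, mem_neighborFinset]
    at hw hw₃
  obtain ⟨⟨hw₁u, hw₁⟩, ⟨hw₂u, hw₂⟩, ⟨hw₃u, hw₃'⟩⟩ := hw
  refine contains_treeDD_of_adj (by omega) huv₁ huv₂ hv h₁ h₂ h₃
    (by simp [hw₁u, (huv₂.ne_of_not_adj hw₁).symm])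
    (by simp [hw₂u, (huv₂.ne_of_not_adj hw₂).symm, hw₁₂.symm])
    (by simp [hw₃u, (huv₁.ne_of_not_adj hw₃').symm, hw₃]) ?_
  rw [sdiff_insert_of_notMem (by simpa using hw₁), sdiff_insert_of_notMem (by simpa using hw₂),
    sdiff_insert_of_notMem (by simpa using hw₃')]
  refine le_card_neighborFinset_sdiff ?_
  have : #({v₁, v₂} : Finset V) ≤ 2 := card_le_two
  omega

lemma degree_add_one_le_card_filter_add {u b : V} (hb : b ∈ (insert u (H.neighborFinset u))ᶜ) :
    H.degree b + 1 ≤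
      #((H.neighborFinset u).filter (H.Adj b)) + #(insert u (H.neighborFinset u))ᶜ := by
  set A := H.neighborFinset u
  have hsub : H.neighborFinset b ⊆ A.filter (H.Adj b) ∪ (insert u A)ᶜ.erase b := by
    intro x hx
    rw [mem_neighborFinset] at hx
    by_cases hxA : x ∈ A
    · exact mem_union_left _ (mem_filter.2 ⟨hxA, hx⟩)
    · refine mem_union_right _ (mem_erase.2 ⟨hx.ne', ?_⟩)
      simp only [mem_compl, mem_insert, not_or] at hb ⊢
      refine ⟨?_, hxA⟩
      rintro rfl
      exact hb.2 (by simpa [A] using hx.symm)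
  rw [← card_neighborFinset_eq_degree, ← card_erase_add_one hb, ← add_assoc]
  exact Nat.add_le_add_right ((card_le_card hsub).trans (card_union_le _ _)) 1

end TreeEmbedding

-- Applied with `t = N(u)` and `s` the complement of `N[u]`.
lemma exists_one_lt_card_bipartiteBelow {α β : Type*} (r : α → β → Prop)
    [∀ a b, Decidable (r a b)] {s : Finset α} {t : Finset β} {m n : ℕ} (hm : 7 ≤ m)
    (hn : m + 3 ≤ n) (hst : #s + #t = m + n - 7) (ht : n - 4 ≤ #t) (ht' : #t ≤ n - 3)
    (hs : ∀ a ∈ s, n - 4 ≤ #(t.bipartiteAbove r a) + #s) :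
    ∃ b ∈ t, 1 < #(s.bipartiteBelow r b) := by
  by_contra! h
  have hcount := card_mul_le_card_mul r (m := n - 4 - #s) (n := 1)
    (fun a ha => by have := hs a ha; omega) h
  obtain ⟨x, rfl⟩ : ∃ x, m = x + 7 := ⟨m - 7, by omega⟩
  obtain ⟨y, rfl⟩ : ∃ y, n = x + y + 10 := ⟨n - (x + 10), by omega⟩
  rcases (by omega : #s = x + 3 ∧ #t = x + y + 7 ∨ #s = x + 4 ∧ #t = x + y + 6)
    with ⟨hs, ht⟩ | ⟨hs, ht⟩
  · rw [hs, ht, show x + y + 10 - 4 - (x + 3) = y + 3 by omega] at hcount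
    nlinarith
  · rw [hs, ht, show x + y + 10 - 4 - (x + 4) = y + 2 by omega] at hcount
    nlinarith

lemma contains_treeDD_of_minDegree {V : Type*} [Fintype V] [DecidableEq V] {H : SimpleGraph V}
    [DecidableRel H.Adj] {m n : ℕ} (hm : 7 ≤ m) (hn : m + 3 ≤ n)
    (hV : Fintype.card V = m + n - 6) (hδ : ∀ v, n - 5 ≤ H.degree v) {u : V}
    (hu : n - 4 ≤ H.degree u) : Contains H (treeDD n) := by
  set A := H.neighborFinset u
  set B := (insert u A)ᶜ
  have huA : u ∉ A := by simp [A]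
  have hAB : #A + #B = m + n - 7 := by
    have := card_le_univ (insert u A)
    rw [card_compl, card_insert_of_notMem huA] at *
    omega
  have hBA : ∀ b ∈ B, n - 4 ≤ #(A.filter (H.Adj b)) + #B := fun b hb => by
    have : H.degree b + 1 ≤ #(A.filter (H.Adj b)) + #B := degree_add_one_le_card_filter_add hb
    have := hδ b
    omega
  have hAdeg : #A = H.degree u := card_neighborFinset_eq_degree _ _
  rcases (by omega : n - 1 ≤ #A ∨ #A = n - 2 ∨ #A ≤ n - 3) with hA | hA | hA
  · exact contains_treeDD_of_le_degree (by omega) hδ (hAdeg ▸ hA)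
  · obtain ⟨b, hb⟩ : B.Nonempty := card_pos.1 (by omega)
    obtain ⟨v₁, hv₁⟩ : (A.filter (H.Adj b)).Nonempty := card_pos.1 (by have := hBA b hb; omega)
    rw [mem_filter, mem_neighborFinset] at hv₁
    exact contains_treeDD_of_adj_compl (by omega) hδ (by omega) hv₁.1 hv₁.2.symm (mem_compl.1 hb)
  · obtain ⟨v₁, hv₁, hw⟩ := exists_one_lt_card_bipartiteBelow H.Adj (s := B) (t := A) hm hn
      (by omega) (by omega) hA hBA
    obtain ⟨w₁, hw₁, w₂, hw₂, hw₁₂⟩ := one_lt_card.1 hw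
    simp only [bipartiteBelow, mem_filter] at hw₁ hw₂
    obtain ⟨b, hb, hbw⟩ := exists_mem_notMem_of_card_lt_card (s := {w₁, w₂}) (t := B)
      (card_le_two.trans_lt (by omega))
    obtain ⟨v₂, hv₂, hv₂₁⟩ := exists_mem_notMem_of_card_lt_card (s := {v₁})
      (t := A.filter (H.Adj b)) (by rw [card_singleton]; have := hBA b hb; omega)
    rw [mem_filter] at hv₂
    rw [mem_neighborFinset] at hv₁ hv₂
    refine contains_treeDD_of_three_adj_compl (by omega) hu hv₁ hv₂.1
      (by simpa [eq_comm] using hv₂₁) hw₁.2.symm hw₂.2.symm hv₂.2.symm hw₁₂ hbw ?_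
    intro w hw
    simp only [mem_insert, mem_singleton] at hw
    rcases hw with rfl | rfl | rfl
    exacts [mem_compl.1 hw₁.1, mem_compl.1 hw₂.1, mem_compl.1 hb]

section BipartiteSumGraph

variable {Γ : Type*} [AddCommGroup Γ]

def bipartiteSumGraph (D : Finset Γ) : SimpleGraph (Γ × Bool) where
  Adj a b := a.2 ≠ b.2 ∧ a.1 + b.1 ∈ D
  symm := ⟨fun a b h => ⟨h.1.symm, add_comm a.1 b.1 ▸ h.2⟩⟩
  loopless := ⟨fun _ h => h.1 rfl⟩

lemma bipartiteSumGraph_adj {D : Finset Γ} {a b : Γ × Bool} :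
    (bipartiteSumGraph D).Adj a b ↔ a.2 ≠ b.2 ∧ a.1 + b.1 ∈ D := Iff.rfl

variable [DecidableEq Γ]

instance (D : Finset Γ) : DecidableRel (bipartiteSumGraph D).Adj :=
  fun a b => inferInstanceAs (Decidable (a.2 ≠ b.2 ∧ a.1 + b.1 ∈ D))

lemma bipartiteSumGraph_isRegularOfDegree [Fintype Γ] (D : Finset Γ) :
    (bipartiteSumGraph D).IsRegularOfDegree #D := by
  intro x
  have : (bipartiteSumGraph D).neighborFinset x = D.image fun d => (d - x.1, !x.2) := by
    obtain ⟨x, e⟩ := x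
    ext ⟨y, c⟩
    simp only [mem_neighborFinset, bipartiteSumGraph_adj, mem_image, Prod.mk.injEq]
    constructor
    · rintro ⟨hc, hy⟩
      exact ⟨x + y, hy, by abel, by cases c <;> cases e <;> simp_all⟩
    · rintro ⟨d, hd, rfl, rfl⟩
      exact ⟨by cases e <;> simp, by simpa using hd⟩
  rw [← card_neighborFinset_eq_degree, this, card_image_of_injective]
  intro d d' h
  simpa using congrArg Prod.fst h

end BipartiteSumGraph

lemma contains_starGraph_or_compl_contains_treeDD {V : Type*} [Fintype V] {m n : ℕ} (hm : 7 ≤ m)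
    (hn : m + 3 ≤ n) (hmo : Odd m) (hne : Even n) (hV : Fintype.card V = m + n - 6)
    (G : SimpleGraph V) : Contains G (_root_.starGraph m) ∨ Contains Gᶜ (treeDD n) := by
  classical
  refine or_iff_not_imp_left.2 fun hG => ?_
  have hδ : ∀ v, n - 5 ≤ Gᶜ.degree v := fun v => by
    have := mt (contains_starGraph_iff (G := G) (by omega)).2 hG
    simp only [not_exists, not_le] at this
    rw [degree_compl, hV]
    have := this v
    omega
  obtain ⟨a, ha⟩ := hmo
  obtain ⟨b, hb⟩ := hne
  obtain ⟨u, hu⟩ := exists_lt_degree_of_odd (hV ▸ ⟨a + b - 3, by omega⟩) ⟨b - 3, by omega⟩ hδ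
  exact contains_treeDD_of_minDegree hm hn hV hδ (by omega : n - 4 ≤ Gᶜ.degree u)

lemma SimpleGraph.IsRegularOfDegree.not_contains_starGraph_and_compl_treeDD {V : Type*} [Fintype V]
    [DecidableEq V] {G : SimpleGraph V} [DecidableRel G.Adj] {m n : ℕ} (hm : 2 ≤ m) (hn : 6 ≤ n)
    (hV : Fintype.card V = m + n - 7) (hG : G.IsRegularOfDegree (m - 2)) :
    ¬Contains G (_root_.starGraph m) ∧ ¬Contains Gᶜ (treeDD n) := by
  constructor
  · rw [contains_starGraph_iff (by omega)]
    rintro ⟨v, hv⟩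
    rw [hG.degree_eq] at hv
    omega
  · intro h
    obtain ⟨v, hv⟩ := h.exists_le_degree_of_treeDD (by omega)
    rw [hG.compl.degree_eq, hV] at hv
    omega

theorem stmt14 (m n : ℕ) (hm : 6 ≤ m) (hn : m + 3 ≤ n) (ho : Odd (m * (n - 1))) :
    ramseyNumber (_root_.starGraph m) (treeDD n) = m + n - 6 := by
  obtain ⟨hmo, hno⟩ := Nat.odd_mul.1 ho
  have hm7 : 7 ≤ m := by obtain ⟨k, rfl⟩ := hmo; omega
  have hne : Even n := by obtain ⟨b, hb⟩ := hno; exact ⟨b + 1, by omega⟩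
  obtain ⟨s, hs⟩ : ∃ s, m + n - 7 = s + s := by
    obtain ⟨a, rfl⟩ := hmo; obtain ⟨b, rfl⟩ := hne; exact ⟨a + b - 3, by omega⟩
  have : NeZero s := ⟨by omega⟩
  obtain ⟨D, -, hD⟩ := exists_subset_card_eq (s := (univ : Finset (ZMod s))) (n := m - 2)
    (by rw [card_univ, ZMod.card]; omega)
  have hcard : Fintype.card (ZMod s × Bool) = m + n - 7 := by
    rw [Fintype.card_prod, ZMod.card, Fintype.card_bool]
    omega
  have hreg : (bipartiteSumGraph D).IsRegularOfDegree (m - 2) :=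
    hD ▸ bipartiteSumGraph_isRegularOfDegree D
  obtain ⟨h₁, h₂⟩ := hreg.not_contains_starGraph_and_compl_treeDD (by omega) (by omega) hcard
  rw [show m + n - 6 = m + n - 7 + 1 by omega]
  refine ramseyNumber_eq_succ (fun G => ?_) hcard _ h₁ h₂
  exact contains_starGraph_or_compl_contains_treeDD hm7 hn hmo hne
    (by rw [Fintype.card_fin]; omega) G
end
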